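/- Let n ≥ 2 and let P be a path of length k ≥ 1. Let A_k denote the number of proper colorings of P when both terminal vertices receive the same fixed (n−1)-element list S and all interior vertices receive a fixed n-element list containing S. Then A_k satisfies the recursion A_k = (n−1)·B_{k−1}, where B_{k-1} is the corresponding count when the two terminal (n−1)-lists are distinct subsets of the common interior n-list. -/

import Mathlib

open SimpleGraph

open Classical in
/-- Number of proper colorings of `G` from list assignment `L`: functions `γ` with
`γ v ∈ L v` for all `v` and `γ v ≠ γ w` for adjacent `v, w`. -/
noncomputable def colCount {V : Type*} [Fintype V] (G : SimpleGraph V) (L : V → Finset ℕ) : ℕ :=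
  ((Fintype.piFinset L).filter fun γ => ∀ v w, G.Adj v w → γ v ≠ γ w).card

/-- `G` is `n`-monophilic: the constant assignment `{1,…,n}` minimizes the number of
list colorings among all `n`-list assignments. -/
def Monophilic {V : Type*} [Fintype V] (G : SimpleGraph V) (n : ℕ) : Prop :=
  ∀ L : V → Finset ℕ, (∀ v, (L v).card = n) →
    colCount G (fun _ => Finset.Icc 1 n) ≤ colCount G L

/-- A type A `(n,n-1)`-list assignment for the path with `k+1` vertices: all interior
vertices share a common `n`-list `T`, and both terminal vertices get the same
`(n-1)`-subset `S` of `T`. -/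
def IsTypeA (n k : ℕ) (L : Fin (k + 1) → Finset ℕ) : Prop :=
  ∃ S T : Finset ℕ, S.card = n - 1 ∧ T.card = n ∧ S ⊆ T ∧
    L 0 = S ∧ L (Fin.last k) = S ∧
    ∀ i : Fin (k + 1), i ≠ 0 → i ≠ Fin.last k → L i = T

/-- A type B `(n,n-1)`-list assignment: as in type A, but the two terminal
`(n-1)`-lists are distinct subsets of the common interior `n`-list. -/
def IsTypeB (n k : ℕ) (L : Fin (k + 1) → Finset ℕ) : Prop :=
  ∃ S₁ S₂ T : Finset ℕ, S₁.card = n - 1 ∧ S₂.card = n - 1 ∧ T.card = n ∧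
    S₁ ⊆ T ∧ S₂ ⊆ T ∧ S₁ ≠ S₂ ∧
    L 0 = S₁ ∧ L (Fin.last k) = S₂ ∧
    ∀ i : Fin (k + 1), i ≠ 0 → i ≠ Fin.last k → L i = T

/-! Colour the first vertex of the type-A path by any of the `n - 1` colours `x ∈ S`. What is left
is a path one edge shorter whose first vertex must avoid `x` and whose last vertex must avoid the
colour `a` of `T \ S`; since `x ≠ a`, this is a type-B assignment. Any two type-B assignments of
the same size are related by a bijection between their interior lists that matches the two missing
colours, so they have the same number of colourings. -/

open Finset Function Set

theorem Finset.exists_bijOn_of_card_eq_of_pair {α β : Type*} {s : Finset α} {t : Finset β}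
    (hcard : s.card = t.card) {a₁ a₂ : α} (ha₁ : a₁ ∈ s) (ha₂ : a₂ ∈ s) (ha : a₁ ≠ a₂)
    {b₁ b₂ : β} (hb₁ : b₁ ∈ t) (hb₂ : b₂ ∈ t) (hb : b₁ ≠ b₂) :
    ∃ f : α → β, BijOn f s t ∧ f a₁ = b₁ ∧ f a₂ = b₂ := by
  classical
  have : Nonempty β := ⟨b₁⟩
  obtain ⟨g, hg⟩ := s.finite_toSet.exists_bijOn_of_encard_eq (t := (t : Set β)) (by simp [hcard])
  set g₁ := Equiv.swap (g a₁) b₁ ∘ g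
  have hg₁ : BijOn g₁ s t := (Equiv.bijOn_swap (hg.mapsTo ha₁) hb₁).comp hg
  have hg₁a₁ : g₁ a₁ = b₁ := by simp [g₁]
  have hg₁a₂ : g₁ a₂ ≠ b₁ := hg₁a₁ ▸ fun h => ha (hg₁.injOn ha₂ ha₁ h).symm
  refine ⟨Equiv.swap (g₁ a₂) b₂ ∘ g₁, (Equiv.bijOn_swap (hg₁.mapsTo ha₂) hb₂).comp hg₁, ?_, by simp⟩
  simp only [comp_apply, hg₁a₁]
  exact Equiv.swap_apply_of_ne_of_ne hg₁a₂.symm hb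

open Classical in
noncomputable def properColorings {V : Type*} [Fintype V] (G : SimpleGraph V)
    (L : V → Finset ℕ) : Finset (V → ℕ) :=
  (Fintype.piFinset L).filter fun γ => ∀ v w, G.Adj v w → γ v ≠ γ w

section

variable {V : Type*} [Fintype V] {G : SimpleGraph V} {L L' : V → Finset ℕ}

theorem colCount_eq_card_properColorings : colCount G L = (properColorings G L).card := rfl

theorem mem_properColorings {γ : V → ℕ} :
    γ ∈ properColorings G L ↔ (∀ v, γ v ∈ L v) ∧ ∀ v w, G.Adj v w → γ v ≠ γ w := by
  simp [properColorings]

theorem colCount_eq_of_bijOn {f : ℕ → ℕ} {T : Set ℕ} (hf : InjOn f T)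
    (hL : ∀ v, ↑(L v) ⊆ T ∧ BijOn f (L v) (L' v)) : colCount G L = colCount G L' := by
  simp only [colCount_eq_card_properColorings]
  have hT : ∀ γ ∈ properColorings G L, ∀ v, γ v ∈ T := fun γ hγ v =>
    (hL v).1 ((mem_properColorings.mp hγ).1 v)
  refine card_nbij (f ∘ ·) (fun γ hγ => ?_) (fun γ₁ hγ₁ γ₂ hγ₂ h => ?_) (fun δ hδ => ?_)
  · obtain ⟨hγL, hγG⟩ := mem_properColorings.mp hγ
    refine mem_properColorings.mpr ⟨fun v => (hL v).2.mapsTo (hγL v), fun v w hvw h => ?_⟩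
    exact hγG v w hvw (hf (hT γ hγ v) (hT γ hγ w) h)
  · funext v
    exact hf (hT γ₁ hγ₁ v) (hT γ₂ hγ₂ v) (congrFun h v)
  · obtain ⟨hδL, hδG⟩ := mem_properColorings.mp hδ
    choose γ hγL hγ using fun v => (hL v).2.surjOn (hδL v)
    refine ⟨γ, mem_properColorings.mpr ⟨hγL, fun v w hvw h => ?_⟩, funext hγ⟩
    exact hδG v w hvw (by rw [← hγ v, ← hγ w, h])

end

theorem SimpleGraph.forall_pathGraph_adj_ne_iff {α : Type*} {n : ℕ} (γ : Fin (n + 1) → α) :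
    (∀ v w, (pathGraph (n + 1)).Adj v w → γ v ≠ γ w) ↔ ∀ i : Fin n, γ i.castSucc ≠ γ i.succ := by
  refine ⟨fun h i => h _ _ (pathGraph_adj.mpr (Or.inl (by simp))), fun h v w hvw => ?_⟩
  have key : ∀ v w : Fin (n + 1), v.val + 1 = w.val → γ v ≠ γ w := by
    intro v w hvw
    obtain ⟨i, rfl⟩ : ∃ i : Fin n, i.castSucc = v := ⟨⟨v, by omega⟩, rfl⟩
    obtain rfl : i.succ = w := Fin.ext (by simp [← hvw])
    exact h i
  rcases pathGraph_adj.mp hvw with hvw | hwv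
  · exact key v w hvw
  · exact (key w v hwv).symm

theorem cons_mem_properColorings_pathGraph_iff {m x : ℕ} {δ : Fin (m + 1) → ℕ}
    {L : Fin (m + 2) → Finset ℕ} :
    (Fin.cons x δ : Fin (m + 2) → ℕ) ∈ properColorings (pathGraph (m + 2)) L ↔
      x ∈ L 0 ∧
        δ ∈ properColorings (pathGraph (m + 1)) (update (Fin.tail L) 0 ((L 1).erase x)) := by
  rw [mem_properColorings, mem_properColorings, forall_pathGraph_adj_ne_iff,
    forall_pathGraph_adj_ne_iff]
  simp only [Fin.forall_fin_succ, Fin.cons_zero, Fin.cons_succ, Fin.castSucc_zero,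
    ← Fin.succ_castSucc, Fin.succ_zero_eq_one, update_self, mem_erase, ne_eq, Fin.succ_ne_zero,
    not_false_eq_true, update_of_ne, Fin.tail]
  grind

theorem colCount_pathGraph_eq_sum {m : ℕ} (L : Fin (m + 2) → Finset ℕ) :
    colCount (pathGraph (m + 2)) L =
      ∑ x ∈ L 0, colCount (pathGraph (m + 1)) (update (Fin.tail L) 0 ((L 1).erase x)) := by
  rw [colCount_eq_card_properColorings, card_eq_sum_card_fiberwise (f := fun γ => γ 0)
    fun γ hγ => (mem_properColorings.mp hγ).1 0]
  refine sum_congr rfl fun x hx => ?_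
  rw [colCount_eq_card_properColorings]
  refine card_nbij' Fin.tail (Fin.cons (α := fun _ => ℕ) x) (fun γ hγ => ?_) (fun δ hδ => ?_)
    (fun γ hγ => ?_) (fun δ _ => by simp only [Fin.tail_cons])
  · obtain ⟨hγ', rfl⟩ := mem_filter.mp (mem_coe.mp hγ)
    rw [← Fin.cons_self_tail γ, cons_mem_properColorings_pathGraph_iff] at hγ'
    exact hγ'.2
  · exact mem_filter.mpr ⟨cons_mem_properColorings_pathGraph_iff.mpr ⟨hx, hδ⟩, rfl⟩
  · obtain ⟨-, rfl⟩ := mem_filter.mp (mem_coe.mp hγ)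
    exact Fin.cons_self_tail γ

namespace IsTypeB

variable {n k : ℕ} {L : Fin (k + 1) → Finset ℕ}

theorem pos (hL : IsTypeB n k L) : 0 < k := by
  obtain ⟨S₁, S₂, T, -, -, -, -, -, hS, h₀, hℓ, -⟩ := hL
  refine Nat.pos_of_ne_zero fun hk => hS ?_
  subst hk
  exact h₀.symm.trans hℓ

theorem exists_erase (hL : IsTypeB n k L) :
    ∃ T : Finset ℕ, T.card = n ∧ ∃ a₁ ∈ T, ∃ a₂ ∈ T, a₁ ≠ a₂ ∧
      L 0 = T.erase a₁ ∧ L (Fin.last k) = T.erase a₂ ∧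
      ∀ i : Fin (k + 1), i ≠ 0 → i ≠ Fin.last k → L i = T := by
  obtain ⟨S₁, S₂, T, hS₁, hS₂, hT, hS₁T, hS₂T, hS, h₀, hℓ, hint⟩ := hL
  have hn : n ≠ 0 := by
    rintro rfl
    obtain rfl := card_eq_zero.mp hT
    exact hS ((subset_empty.mp hS₁T).trans (subset_empty.mp hS₂T).symm)
  have hcov : ∀ S ⊆ T, S.card = n - 1 → S ⋖ T := fun S hST hS =>
    covBy_iff_card_sdiff_eq_one.mpr ⟨hST, by rw [card_sdiff_of_subset hST]; omega⟩
  obtain ⟨a₁, ha₁, rfl⟩ := (hcov S₁ hS₁T hS₁).exists_finset_erase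
  obtain ⟨a₂, ha₂, rfl⟩ := (hcov S₂ hS₂T hS₂).exists_finset_erase
  exact ⟨T, hT, a₁, ha₁, a₂, ha₂, fun h => hS (h ▸ rfl), h₀, hℓ, hint⟩

theorem colCount_eq {G : SimpleGraph (Fin (k + 1))} {L' : Fin (k + 1) → Finset ℕ}
    (hL : IsTypeB n k L) (hL' : IsTypeB n k L') : colCount G L = colCount G L' := by
  obtain ⟨T, hT, a₁, ha₁, a₂, ha₂, ha, h₀, hℓ, hint⟩ := hL.exists_erase
  obtain ⟨T', hT', b₁, hb₁, b₂, hb₂, hb, h₀', hℓ', hint'⟩ := hL'.exists_erase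
  obtain ⟨f, hf, rfl, rfl⟩ :=
    exists_bijOn_of_card_eq_of_pair (hT.trans hT'.symm) ha₁ ha₂ ha hb₁ hb₂ hb
  refine colCount_eq_of_bijOn hf.injOn fun v => ?_
  by_cases hv₀ : v = 0
  · rw [hv₀, h₀, h₀', coe_erase, coe_erase]
    exact ⟨sdiff_subset, hf.sdiff_singleton ha₁⟩
  by_cases hvℓ : v = Fin.last k
  · rw [hvℓ, hℓ, hℓ', coe_erase, coe_erase]
    exact ⟨sdiff_subset, hf.sdiff_singleton ha₂⟩
  rw [hint v hv₀ hvℓ, hint' v hv₀ hvℓ]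
  exact ⟨subset_rfl, hf⟩

end IsTypeB

theorem IsTypeA.isTypeB_update_tail {n m : ℕ} {L : Fin (m + 2) → Finset ℕ}
    (hL : IsTypeA n (m + 1) L) (hm : 0 < m) {x : ℕ} (hx : x ∈ L 0) :
    IsTypeB n m (update (Fin.tail L) 0 ((L 1).erase x)) := by
  obtain ⟨S, T, hS, hT, hST, h₀, hℓ, hint⟩ := hL
  have hL₁ : L 1 = T := hint 1 (by simp) (by simp [Fin.ext_iff]; omega)
  rw [h₀] at hx
  refine ⟨T.erase x, S, T, by rw [card_erase_of_mem (hST hx), hT], hS, hT, erase_subset x T, hST,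
    fun h => notMem_erase x T (h ▸ hx), by rw [update_self, hL₁], ?_, fun j hj₀ hjℓ => ?_⟩
  · rw [update_of_ne (by simp [Fin.ext_iff]; omega : Fin.last m ≠ 0), Fin.tail, Fin.succ_last, hℓ]
  · rw [update_of_ne hj₀, Fin.tail]
    exact hint _ (Fin.succ_ne_zero j) (by rwa [Ne, ← Fin.succ_last, Fin.succ_inj])

theorem stmt4_general (n k : ℕ)
    (L : Fin (k + 1) → Finset ℕ) (hL : IsTypeA n k L)
    (L' : Fin ((k - 1) + 1) → Finset ℕ) (hL' : IsTypeB n (k - 1) L') :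
    colCount (pathGraph (k + 1)) L = (n - 1) * colCount (pathGraph ((k - 1) + 1)) L' := by
  have hk : 0 < k - 1 := hL'.pos
  obtain ⟨m, rfl⟩ : ∃ m, k = m + 1 := ⟨k - 1, by omega⟩
  obtain ⟨S, T, hS, -, -, h₀, -⟩ := id hL
  change colCount (pathGraph (m + 2)) L = (n - 1) * colCount (pathGraph (m + 1)) L'
  rw [colCount_pathGraph_eq_sum,
    sum_congr rfl fun x hx => (hL.isTypeB_update_tail hk hx).colCount_eq hL', sum_const, h₀, hS,
    smul_eq_mul]

theorem stmt4 (n k : ℕ) (hn : 2 ≤ n) (hk : 1 ≤ k)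
    (L : Fin (k + 1) → Finset ℕ) (hL : IsTypeA n k L)
    (L' : Fin ((k - 1) + 1) → Finset ℕ) (hL' : IsTypeB n (k - 1) L') :
    colCount (pathGraph (k + 1)) L = (n - 1) * colCount (pathGraph ((k - 1) + 1)) L' :=
  stmt4_general n k L hL L' hL'
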